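/- arXiv:2202.03322 — 2 statements merged into one kernel-verified Lean document; each statement's English description precedes it below -/
import Mathlib

section
/- For any graph G and any set F of edges of G, contracting all edges of F decreases the minimum vertex cover number by at most the rank of F: vc(G/F) ≥ vc(G) − rank(V(F)), where rank(V(F)) is the number of vertices incident to F minus the number of connected components of the subgraph induced by those vertices. -/
/-!
Let `π : V → V/F` be the quotient map and `S = V(F)`. Lift a minimum vertex cover `C'` of `G/F`
to `G`: take every vertex whose class lies in `C'`, together with all of `S`, except one
representative of each class of `S` missing from `C'`. The two endpoints of an edge inside one
class cannot both be that representative, so this is a cover `C`, and since the classes outside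
`S` are singletons, counting gives `|C| + |π(S)| ≤ |C'| + |S|`. As `F ⊆ E(G)`, each class of `S`
lies in one component of `G[S]`, so `G[S]` has at most `|π(S)|` components.
-/

open SimpleGraph

/-- A set of vertices is a vertex cover if it meets every edge. -/
def IsVertexCover {V : Type*} (G : SimpleGraph V) (C : Set V) : Prop :=
  ∀ ⦃u v : V⦄, G.Adj u v → u ∈ C ∨ v ∈ C

/-- The minimum vertex cover number of a graph. -/
noncomputable def vc {V : Type*} (G : SimpleGraph V) : ℕ :=
  sInf {n | ∃ C : Set V, _root_.IsVertexCover G C ∧ C.Finite ∧ Nat.card C = n}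

/-- `X` is a minimum vertex cover of `G`. -/
def IsMinVertexCover {V : Type*} (G : SimpleGraph V) (X : Set V) : Prop :=
  _root_.IsVertexCover G X ∧ ∀ C : Set V, _root_.IsVertexCover G C → Nat.card X ≤ Nat.card C

/-- The rank of a graph: number of vertices minus number of connected components. -/
noncomputable def grank {V : Type*} (G : SimpleGraph V) : ℕ :=
  Nat.card V - Nat.card G.ConnectedComponent

/-- The rank of a set of vertices: the rank of the induced subgraph. -/
noncomputable def srank {V : Type*} (G : SimpleGraph V) (S : Set V) : ℕ :=
  grank (G.induce S)

/-- The set of endpoints of a set of edges. -/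
def edgeVerts {V : Type*} (F : Set (Sym2 V)) : Set V := {v | ∃ e ∈ F, v ∈ e}

/-- The setoid identifying the vertices connected through edges of `F`. -/
def contractSetoid {V : Type*} (F : Set (Sym2 V)) : Setoid V :=
  (SimpleGraph.fromEdgeSet F).reachableSetoid

/-- The graph obtained from `G` by contracting all the edges in `F`. -/
def contract {V : Type*} (G : SimpleGraph V) (F : Set (Sym2 V)) :
    SimpleGraph (Quotient (contractSetoid F)) where
  Adj a b := a ≠ b ∧ ∃ u v : V, Quotient.mk (contractSetoid F) u = a ∧
    Quotient.mk (contractSetoid F) v = b ∧ G.Adj u v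
  symm := by
    constructor; rintro a b ⟨hab, u, v, hu, hv, h⟩
    exact ⟨hab.symm, v, u, hv, hu, h.symm⟩
  loopless := by constructor; rintro a ⟨h, -⟩; exact h rfl

section Contraction

variable {V : Type*} {G : SimpleGraph V} {F : Set (Sym2 V)} {u v : V}

local notation "π" => Quotient.mk (contractSetoid F)

lemma mk_eq_mk_iff_reachable : π u = π v ↔ (fromEdgeSet F).Reachable u v :=
  Quotient.eq

lemma mem_edgeVerts_of_reachable_of_ne (h : (fromEdgeSet F).Reachable u v) (hne : u ≠ v) :
    u ∈ edgeVerts F := by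
  obtain ⟨p⟩ := h
  cases p with
  | nil => exact absurd rfl hne
  | cons h _ => exact ⟨s(u, _), h.1, Sym2.mem_mk_left _ _⟩

lemma mem_edgeVerts_of_mk_eq_of_ne (h : π u = π v) (hne : u ≠ v) : u ∈ edgeVerts F :=
  mem_edgeVerts_of_reachable_of_ne (mk_eq_mk_iff_reachable.mp h) hne

lemma mk_injOn_compl_edgeVerts : Set.InjOn π (edgeVerts F)ᶜ := fun _ hu _ _ h ↦
  not_not.mp fun hne ↦ hu (mem_edgeVerts_of_mk_eq_of_ne h hne)

lemma mk_mem_image_edgeVerts_iff : π v ∈ π '' edgeVerts F ↔ v ∈ edgeVerts F := by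
  refine ⟨?_, Set.mem_image_of_mem _⟩
  rintro ⟨w, hw, hwv⟩
  by_cases hvw : v = w
  · exact hvw ▸ hw
  · exact mem_edgeVerts_of_mk_eq_of_ne hwv.symm hvw

lemma reachable_induce_edgeVerts (hF : F ⊆ G.edgeSet) (p : (fromEdgeSet F).Walk u v)
    (hu : u ∈ edgeVerts F) (hv : v ∈ edgeVerts F) :
    (G.induce (edgeVerts F)).Reachable ⟨u, hu⟩ ⟨v, hv⟩ := by
  induction p with
  | nil => rfl
  | @cons a b c h p ih =>
    have hb : b ∈ edgeVerts F := ⟨s(a, b), h.1, Sym2.mem_mk_right _ _⟩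
    have hab : (G.induce (edgeVerts F)).Adj ⟨a, hu⟩ ⟨b, hb⟩ := by simpa using hF h.1
    exact hab.reachable.trans (ih hb hv)

lemma card_connectedComponent_induce_edgeVerts_le [Finite V] (hF : F ⊆ G.edgeSet) :
    Nat.card (G.induce (edgeVerts F)).ConnectedComponent ≤ (π '' edgeVerts F).ncard := by
  rw [← Nat.card_coe_set_eq]
  refine Nat.card_le_card_of_surjective (fun q ↦ (G.induce (edgeVerts F)).connectedComponentMk
    ⟨q.1.out, mk_mem_image_edgeVerts_iff.mp (by rw [Quotient.out_eq]; exact q.2)⟩) ?_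
  intro c
  obtain ⟨⟨v, hv⟩, rfl⟩ := c.exists_rep
  refine ⟨⟨π v, v, hv, rfl⟩, ConnectedComponent.sound ?_⟩
  obtain ⟨p⟩ := mk_eq_mk_iff_reachable.mp (Quotient.out_eq (π v))
  exact reachable_induce_edgeVerts hF p _ hv

variable (F) in
def liftCover (C' : Set (Quotient (contractSetoid F))) : Set V :=
  (π ⁻¹' C' ∪ edgeVerts F) \ Quotient.out '' (π '' edgeVerts F \ C')

lemma isVertexCover_liftCover {C' : Set (Quotient (contractSetoid F))}
    (hC' : _root_.IsVertexCover (contract G F) C') :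
    _root_.IsVertexCover G (liftCover F C') := by
  have out_notMem : ∀ w, π w ∈ C' → w ∉ Quotient.out '' (π '' edgeVerts F \ C') := by
    rintro _ hw ⟨q, hq, rfl⟩
    exact hq.2 (Quotient.out_eq q ▸ hw)
  intro u v huv
  by_cases huv' : π u = π v
  · have hu := mem_edgeVerts_of_mk_eq_of_ne huv' huv.ne
    have hv := mem_edgeVerts_of_mk_eq_of_ne huv'.symm huv.ne.symm
    by_cases hu' : u ∈ Quotient.out '' (π '' edgeVerts F \ C')
    · refine Or.inr ⟨Or.inr hv, ?_⟩
      rintro ⟨r, -, rfl⟩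
      obtain ⟨q, -, rfl⟩ := hu'
      rw [Quotient.out_eq, Quotient.out_eq] at huv'
      exact huv.ne (congrArg Quotient.out huv')
    · exact Or.inl ⟨Or.inr hu, hu'⟩
  · rcases hC' ⟨huv', u, v, rfl, rfl, huv⟩ with h | h
    · exact Or.inl ⟨Or.inl h, out_notMem u h⟩
    · exact Or.inr ⟨Or.inl h, out_notMem v h⟩

lemma ncard_liftCover_add_le [Finite V] (C' : Set (Quotient (contractSetoid F))) :
    (liftCover F C').ncard + (π '' edgeVerts F).ncard ≤ C'.ncard + (edgeVerts F).ncard := by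
  set S := edgeVerts F
  set P := π '' S
  set U := π ⁻¹' C' ∪ S
  have hRU : Quotient.out '' (P \ C') ⊆ U := by
    rintro _ ⟨q, hq, rfl⟩
    exact Or.inr (mk_mem_image_edgeVerts_iff.mp ((Quotient.out_eq q).symm ▸ hq.1))
  -- outside `S` the quotient map is injective and misses `π(S)`
  have hUS : (U \ S).ncard ≤ (C' \ P).ncard := by
    refine Set.ncard_le_ncard_of_injOn π ?_ (mk_injOn_compl_edgeVerts.mono fun _ h ↦ h.2)
    rintro v ⟨hvC' | hvS, hvS'⟩
    · exact ⟨hvC', fun h ↦ hvS' (mk_mem_image_edgeVerts_iff.mp h)⟩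
    · exact absurd hvS hvS'
  have hC : (liftCover F C').ncard + (P \ C').ncard = U.ncard := by
    rw [← Set.ncard_image_of_injective _ Quotient.out_injective]
    exact Set.ncard_sdiff_add_ncard_of_subset hRU
  have hU := Set.ncard_le_ncard_sdiff_add_ncard U S
  have hPC' := Set.ncard_sdiff_add_ncard P C'
  have hC'P := Set.ncard_sdiff_add_ncard C' P
  rw [Set.union_comm] at hC'P
  omega

end Contraction

section VertexCover

variable {V : Type*} [Finite V] (G : SimpleGraph V)

lemma vc_le_ncard {C : Set V} (hC : _root_.IsVertexCover G C) : vc G ≤ C.ncard :=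
  Nat.sInf_le ⟨C, hC, C.toFinite, rfl⟩

lemma exists_isVertexCover_ncard_eq_vc : ∃ C, _root_.IsVertexCover G C ∧ C.ncard = vc G := by
  have hne : {n | ∃ C : Set V, _root_.IsVertexCover G C ∧ C.Finite ∧ Nat.card C = n}.Nonempty :=
    ⟨_, Set.univ, fun _ _ _ ↦ Or.inl trivial, Set.toFinite _, rfl⟩
  obtain ⟨C, hC, -, hcard⟩ := Nat.sInf_mem hne
  exact ⟨C, hC, hcard⟩

end VertexCover

theorem stmt3 {V : Type*} [Fintype V] (G : SimpleGraph V) (F : Set (Sym2 V))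
    (hF : F ⊆ G.edgeSet) :
    vc G ≤ vc (contract G F) + srank G (edgeVerts F) := by
  obtain ⟨C', hC', hC'card⟩ := exists_isVertexCover_ncard_eq_vc (contract G F)
  have hvc := vc_le_ncard G (isVertexCover_liftCover hC')
  have hcount := ncard_liftCover_add_le C'
  have hcomp := card_connectedComponent_induce_edgeVerts_le hF
  rw [srank, grank, Nat.card_coe_set_eq]
  omega
end

section
/- Let G be a graph whose vertex set is partitioned into cliques V_1,…,V_q, and let G' be obtained from G by adding a universal vertex α and q+1 pendant vertices adjacent to α. Then G has an independent set containing exactly one vertex from each V_i if and only if G' contains a set F of at least 2q+1 edges such that the subgraph of G' induced on the endpoints of F is a forest. -/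
open SimpleGraph

/-- The graph `G'` of the W[1]-hardness reduction: `G` plus a universal vertex `α`
(the `Sum.inr (Sum.inl ())` vertex) and `q + 1` pendant vertices adjacent only to `α`. -/
def Gp {V : Type*} (G : SimpleGraph V) (q : ℕ) :
    SimpleGraph (V ⊕ (Unit ⊕ Fin (q + 1))) :=
  SimpleGraph.fromRel (fun a b =>
    match a, b with
    | .inl u, .inl v => G.Adj u v
    | .inl _, .inr (.inl _) => True
    | .inr (.inl _), .inr (.inr _) => True
    | _, _ => False)

/-! A multicolored independent set together with the `q + 1` pendant vertices spans a star
centred at `α` with `2q + 1` edges. Conversely, `2q + 1` edges inducing a forest have at least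
`2q + 2` endpoints. A forest is triangle-free, so it meets each clique `V_i` at most twice; and if
it contains `α`, its vertices in `G` are pairwise non-adjacent, so it meets each `V_i` at most
once. Without `α` there are no pendant vertices either, hence at most `2q` vertices: so `α` is
present, and since at most `q + 2` vertices lie outside `G`, the vertices in `G` pick exactly one
vertex from each `V_i`. -/

open Finset

namespace SimpleGraph

variable {W : Type*}

lemma IsAcyclic.card_edgeSet_add_one_le [Finite W] [Nonempty W] {H : SimpleGraph W}
    (h : H.IsAcyclic) : Nat.card H.edgeSet + 1 ≤ Nat.card W := by
  obtain ⟨T, hHT, -, hT⟩ := connected_top.exists_isTree_le_of_le_of_isAcyclic le_top h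
  rw [← (isTree_iff_connected_and_card.mp hT).2]
  exact Nat.add_le_add_right (Nat.card_mono (Set.toFinite _) (edgeSet_mono hHT)) 1

lemma IsAcyclic.not_adj_of_adj_of_adj {H : SimpleGraph W} (h : H.IsAcyclic) {a b c : W}
    (hab : H.Adj a b) (hbc : H.Adj b c) : ¬ H.Adj a c := by
  classical
  exact fun hac => h.cliqueFree le_rfl {a, b, c} (is3Clique_triple_iff.mpr ⟨hab, hac, hbc⟩)

lemma card_le_card_edgeSet_induce_edgeVerts [Finite W] {H : SimpleGraph W} {F : Set (Sym2 W)}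
    (hF : F ⊆ H.edgeSet) : Nat.card F ≤ Nat.card (H.induce (edgeVerts F)).edgeSet := by
  have hsub : F ⊆ (Function.Embedding.subtype (· ∈ edgeVerts F)).sym2Map ''
      (H.induce (edgeVerts F)).edgeSet := by
    intro e he
    induction e using Sym2.ind with
    | h a b =>
      exact ⟨s(⟨a, _, he, Sym2.mem_mk_left a b⟩, ⟨b, _, he, Sym2.mem_mk_right a b⟩),
        hF he, rfl⟩
  calc Nat.card F ≤ Nat.card (_ '' (H.induce (edgeVerts F)).edgeSet) :=
        Nat.card_mono (Set.toFinite _) hsub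
    _ = _ := Nat.card_image_of_injective (Function.Embedding.injective _) _

lemma card_add_one_le_card_edgeVerts [Finite W] {H : SimpleGraph W} {F : Set (Sym2 W)}
    (hF : F ⊆ H.edgeSet) (hne : F.Nonempty) (h : (H.induce (edgeVerts F)).IsAcyclic) :
    Nat.card F + 1 ≤ Nat.card (edgeVerts F) := by
  obtain ⟨e, he⟩ := hne
  have : Nonempty (edgeVerts F) := ⟨⟨e.out.1, e, he, Sym2.out_fst_mem e⟩⟩
  have := h.card_edgeSet_add_one_le
  have := card_le_card_edgeSet_induce_edgeVerts hF
  omega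

end SimpleGraph

lemma edgeVerts_range_subset {W ι : Type*} (a : W) (g : ι → W) :
    edgeVerts (Set.range fun k => s(a, g k)) ⊆ insert a (Set.range g) := by
  rintro x ⟨_, ⟨k, rfl⟩, hx⟩
  rcases Sym2.mem_iff.mp hx with rfl | rfl
  exacts [Set.mem_insert _ _, Or.inr ⟨k, rfl⟩]

namespace Gp

variable {V : Type*} {G : SimpleGraph V} {q : ℕ}

@[simp]
lemma adj_inl_inl {u v : V} : (Gp G q).Adj (.inl u) (.inl v) ↔ G.Adj u v := by
  simpa [Gp, G.adj_comm v u] using @Adj.ne _ G u v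

lemma hub_mem_edgeVerts_of_pendant_mem {F : Set (Sym2 (V ⊕ (Unit ⊕ Fin (q + 1))))}
    (hF : F ⊆ (Gp G q).edgeSet) {i : Fin (q + 1)} (hi : .inr (.inr i) ∈ edgeVerts F) :
    .inr (.inl ()) ∈ edgeVerts F := by
  obtain ⟨e, he, hie⟩ := hi
  obtain ⟨x, rfl⟩ := Sym2.mem_iff_exists.mp hie
  have hadj : (Gp G q).Adj (.inr (.inr i)) x := hF he
  rcases x with _ | _ | _ <;> simp [Gp] at hadj
  exact ⟨_, he, Sym2.mem_mk_right _ _⟩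

lemma exists_forest_of_multicolored {P : V → Fin q} {f : Fin q → V} (hP : ∀ i, P (f i) = i)
    (hind : ∀ i j, i ≠ j → ¬ G.Adj (f i) (f j)) :
    ∃ F : Set (Sym2 (V ⊕ (Unit ⊕ Fin (q + 1)))), F ⊆ (Gp G q).edgeSet ∧
      2 * q + 1 ≤ Nat.card F ∧ ((Gp G q).induce (edgeVerts F)).IsAcyclic := by
  let g : Fin q ⊕ Fin (q + 1) → V ⊕ (Unit ⊕ Fin (q + 1)) :=
    Sum.elim (.inl ∘ f) (.inr ∘ .inr)
  have hg : g.Injective := (Sum.inl_injective.comp (Function.LeftInverse.injective hP)).sumElim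
    (Sum.inr_injective.comp Sum.inr_injective) (by simp)
  have hgg : ∀ k l, ¬ (Gp G q).Adj (g k) (g l) := by
    rintro (i | i) (j | j)
    · simp only [g, Sum.elim_inl, Function.comp_apply, adj_inl_inl]
      obtain rfl | hij := eq_or_ne i j
      exacts [G.irrefl, hind i j hij]
    all_goals simp [g, Gp]
  refine ⟨Set.range fun k => s(.inr (.inl ()), g k), ?_, ?_, ?_⟩
  · rintro _ ⟨k | k, rfl⟩ <;> simp [g, Gp]
  · rw [Nat.card_range_of_injective fun k l hkl => hg (Sym2.congr_right.mp hkl)]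
    simp only [Nat.card_eq_fintype_card, Fintype.card_sum, Fintype.card_fin]
    omega
  · have hhub : .inr (.inl ()) ∈ edgeVerts (Set.range fun k => s(.inr (.inl ()), g k)) :=
      ⟨_, ⟨.inr 0, rfl⟩, Sym2.mem_mk_left _ _⟩
    refine (isAcyclic_starGraph ⟨_, hhub⟩).anti fun x y hxy =>
      starGraph_adj.mpr ⟨hxy.ne, ?_⟩
    rcases edgeVerts_range_subset _ g x.2 with hx | ⟨k, hk⟩
    · exact .inl (Subtype.ext hx)
    rcases edgeVerts_range_subset _ g y.2 with hy | ⟨l, hl⟩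
    · exact .inr (Subtype.ext hy)
    exact (hgg k l (hk ▸ hl ▸ hxy)).elim

variable {P : V → Fin q} {s : Finset (V ⊕ (Unit ⊕ Fin (q + 1)))}

lemma card_toLeft_le_two_mul (hclique : ∀ u v : V, P u = P v → u ≠ v → G.Adj u v)
    (hforest : ((Gp G q).induce s).IsAcyclic) : #s.toLeft ≤ 2 * q := by
  classical
  calc #s.toLeft ≤ 2 * #(s.toLeft.image P) := card_le_mul_card_image _ 2 fun i _ => ?_
    _ ≤ 2 * q := by grw [card_le_univ, Fintype.card_fin]
  by_contra! h3
  obtain ⟨a, ha, b, hb, c, hc, hab, hac, hbc⟩ := two_lt_card.mp h3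
  simp only [mem_filter, mem_toLeft] at ha hb hc
  exact hforest.not_adj_of_adj_of_adj (a := ⟨_, ha.1⟩) (b := ⟨_, hb.1⟩) (c := ⟨_, hc.1⟩)
    (by simpa using hclique a b (ha.2.trans hb.2.symm) hab)
    (by simpa using hclique b c (hb.2.trans hc.2.symm) hbc)
    (by simpa using hclique a c (ha.2.trans hc.2.symm) hac)

lemma not_adj_of_mem_toLeft (hforest : ((Gp G q).induce s).IsAcyclic) (hhub : .inr (.inl ()) ∈ s)
    ⦃u v : V⦄ (hu : u ∈ s.toLeft) (hv : v ∈ s.toLeft) : ¬ G.Adj u v := fun huv =>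
  hforest.not_adj_of_adj_of_adj (a := ⟨_, mem_toLeft.mp hu⟩) (b := ⟨_, hhub⟩)
    (c := ⟨_, mem_toLeft.mp hv⟩) (by simp [Gp]) (by simp [Gp]) (by simpa using huv)

lemma exists_multicolored_of_forest [Fintype V]
    (hclique : ∀ u v : V, P u = P v → u ≠ v → G.Adj u v)
    {F : Set (Sym2 (V ⊕ (Unit ⊕ Fin (q + 1))))} (hF : F ⊆ (Gp G q).edgeSet)
    (hcard : 2 * q + 1 ≤ Nat.card F) (hforest : ((Gp G q).induce (edgeVerts F)).IsAcyclic) :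
    ∃ f : Fin q → V, (∀ i, P (f i) = i) ∧ ∀ i j, i ≠ j → ¬ G.Adj (f i) (f j) := by
  classical
  have hs := card_add_one_le_card_edgeVerts hF (Set.nonempty_of_ncard_ne_zero (by
    rw [← Nat.card_coe_set_eq]; omega)) hforest
  rw [Nat.card_eq_card_toFinset (edgeVerts F)] at hs
  rw [← Set.coe_toFinset (edgeVerts F)] at hforest
  set s := (edgeVerts F).toFinset
  have hsplit : #s.toLeft + #s.toRight = #s := card_toLeft_add_card_toRight
  have hright : #s.toRight ≤ q + 2 := by
    grw [card_le_univ]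
    simp only [Fintype.card_sum, Fintype.card_unit, Fintype.card_fin]
    omega
  have hhub : .inr (.inl ()) ∈ s := by
    by_contra hhub
    have hempty : #s.toRight = 0 := by
      refine card_eq_zero.mpr (eq_empty_of_forall_notMem fun y hy => hhub ?_)
      rcases y with ⟨⟩ | i
      · exact mem_toRight.mp hy
      · simpa [s] using hub_mem_edgeVerts_of_pendant_mem hF (by simpa [s] using hy)
    have := card_toLeft_le_two_mul hclique hforest
    omega
  have hind := not_adj_of_mem_toLeft hforest hhub
  have hinj : Set.InjOn P s.toLeft := fun u hu v hv h =>
    by_contra fun hne => hind hu hv (hclique u v h hne)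
  have hsurj : s.toLeft.image P = univ := by
    refine eq_univ_of_card _ (le_antisymm (card_le_univ _) ?_)
    rw [card_image_of_injOn hinj, Fintype.card_fin]
    omega
  choose f hfs hfP using fun i => mem_image.mp (hsurj ▸ mem_univ i)
  exact ⟨f, hfP, fun i j _ => hind (hfs i) (hfs j)⟩

end Gp

theorem stmt12 {V : Type*} [Fintype V] (G : SimpleGraph V) (q : ℕ)
    (P : V → Fin q) (hclique : ∀ u v : V, P u = P v → u ≠ v → G.Adj u v) :
    (∃ f : Fin q → V, (∀ i, P (f i) = i) ∧
      ∀ i j, i ≠ j → ¬ G.Adj (f i) (f j)) ↔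
    ∃ F : Set (Sym2 (V ⊕ (Unit ⊕ Fin (q + 1)))), F ⊆ (Gp G q).edgeSet ∧
      2 * q + 1 ≤ Nat.card F ∧ ((Gp G q).induce (edgeVerts F)).IsAcyclic :=
  ⟨fun ⟨_, hP, hind⟩ => Gp.exists_forest_of_multicolored hP hind,
    fun ⟨_, hF, hcard, hac⟩ => Gp.exists_multicolored_of_forest hclique hF hcard hac⟩
end
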